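/- Let A ∈ M_n(ℤ) be non-singular with h_A irreducible over ℚ. Let K be a number field, λ ∈ K a root of h_A with K = ℚ(λ), let u ∈ K^n be a nonzero vector with (A over K)·u = λ·u, and let w ∈ K^n satisfy (Aᵗ over K)·w = λ·w and Σ_{j=1}^{n} w_j·u_j = 1 (such w exists and is unique). Then the map μ : G_A → K defined by μ(x) = Σ_{j=1}^{n} x_j·w_j (rationals x_j viewed in K) is an injective homomorphism of additive groups, and its image equals Y = {m_1·λ^{k_1}·w_1 + ⋯ + m_n·λ^{k_n}·w_n : m_1,…,m_n ∈ ℤ, k_1,…,k_n ∈ ℤ}, the ℤ[λ, λ⁻¹]-submodule of K generated by w_1, …, w_n. In particular G_A is isomorphic as an abelian group to Y. -/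

import Mathlib

open Matrix Polynomial

noncomputable section

/-- The matrix `A` viewed over `ℚ`. -/
def Aq {n : ℕ} (A : Matrix (Fin n) (Fin n) ℤ) : Matrix (Fin n) (Fin n) ℚ :=
  A.map (Int.cast : ℤ → ℚ)

/-- The group `G_A = {A^k x : x ∈ ℤ^n, k ∈ ℤ} ⊆ ℚ^n`. -/
def GA {n : ℕ} (A : Matrix (Fin n) (Fin n) ℤ) : Set (Fin n → ℚ) :=
  {v | ∃ (k : ℤ) (x : Fin n → ℤ), v = (Aq A ^ k) *ᵥ fun i => ((x i : ℚ))}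

/-- `P'(A)`: primes dividing `det A` such that `h_A ≢ x^n (mod p)`. -/
def Pbad {n : ℕ} (A : Matrix (Fin n) (Fin n) ℤ) : Set ℕ :=
  {p | p.Prime ∧ (p : ℤ) ∣ A.det ∧ A.charpoly.map (Int.castRingHom (ZMod p)) ≠ X ^ n}

/-- `t_p`: multiplicity of `0` as a root of `h_A` mod `p`. -/
def tp {n : ℕ} (A : Matrix (Fin n) (Fin n) ℤ) (p : ℕ) : ℕ :=
  Polynomial.rootMultiplicity 0 (A.charpoly.map (Int.castRingHom (ZMod p)))

variable {n : ℕ} {K : Type} [Field K] [CharZero K]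

/-- μ as a linear map -/
def mu (w : Fin n → K) : (Fin n → ℚ) →ₗ[ℚ] K where
  toFun x := ∑ j, ((x j : ℚ) : K) * w j
  map_add' a b := by
    simp [Pi.add_apply, add_mul, Finset.sum_add_distrib]
  map_smul' c a := by
    simp only [Pi.smul_apply, smul_eq_mul, RingHom.id_apply, Finset.smul_sum, Rat.smul_def,
      Rat.cast_mul, mul_assoc]

lemma mu_mulVec (A : Matrix (Fin n) (Fin n) ℤ) (w : Fin n → K) (lam : K)
    (hAw : ((Aᵀ).map (Int.cast : ℤ → K)) *ᵥ w = lam • w) (x : Fin n → ℚ) :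
    mu w (Aq A *ᵥ x) = lam * mu w x := by
  have h : ∀ i, ∑ j, ((A j i : K)) * w j = lam * w i := by
    intro i
    have := congrFun hAw i
    simpa [mulVec, dotProduct] using this
  simp only [mu, LinearMap.coe_mk, AddHom.coe_mk, Aq, mulVec, dotProduct, map_apply]
  push_cast
  simp only [Finset.sum_mul]
  rw [Finset.sum_comm, Finset.mul_sum]
  refine Finset.sum_congr rfl fun i _ => ?_
  calc ∑ j, (A j i : K) * (x i : K) * w j = ((x i : K)) * ∑ j, (A j i : K) * w j := by
        rw [Finset.mul_sum]; exact Finset.sum_congr rfl fun j _ => by ring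
    _ = lam * ((x i : K) * w i) := by rw [h i]; ring

lemma mu_pow (A : Matrix (Fin n) (Fin n) ℤ) (w : Fin n → K) (lam : K)
    (hAw : ((Aᵀ).map (Int.cast : ℤ → K)) *ᵥ w = lam • w) (m : ℕ) (x : Fin n → ℚ) :
    mu w ((Aq A ^ m) *ᵥ x) = lam ^ m * mu w x := by
  induction m with
  | zero => simp
  | succ m ih =>
    rw [pow_succ', ← Matrix.mulVec_mulVec, mu_mulVec A w lam hAw, ih, pow_succ']
    ring

lemma isUnit_det_Aq {A : Matrix (Fin n) (Fin n) ℤ} (hA : A.det ≠ 0) :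
    IsUnit (Aq A).det := by
  have h : (Aq A).det = (A.det : ℚ) := by
    rw [Aq]
    exact ((Int.castRingHom ℚ).map_det A).symm
  rw [h]
  exact isUnit_iff_ne_zero.mpr (by exact_mod_cast hA)

lemma mu_zpow (A : Matrix (Fin n) (Fin n) ℤ) (hA : A.det ≠ 0) (w : Fin n → K) (lam : K)
    (hlam : lam ≠ 0)
    (hAw : ((Aᵀ).map (Int.cast : ℤ → K)) *ᵥ w = lam • w) (k : ℤ) (x : Fin n → ℚ) :
    mu w ((Aq A ^ k) *ᵥ x) = lam ^ k * mu w x := by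
  match k with
  | Int.ofNat m => simpa [zpow_natCast] using mu_pow A w lam hAw m x
  | Int.negSucc m =>
    set B := Aq A ^ (m + 1) with hBdef
    have hB : IsUnit B.det := by
      rw [hBdef, Matrix.det_pow]; exact (isUnit_det_Aq hA).pow _
    have hBx : B *ᵥ (B⁻¹ *ᵥ x) = x := by
      rw [Matrix.mulVec_mulVec, Matrix.mul_nonsing_inv _ hB, Matrix.one_mulVec]
    have h1 : mu w x = lam ^ (m + 1) * mu w (B⁻¹ *ᵥ x) := by
      conv_lhs => rw [← hBx]
      exact mu_pow A w lam hAw (m + 1) _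
    have hl : lam ^ (m + 1) ≠ 0 := pow_ne_zero _ hlam
    rw [zpow_negSucc, ← hBdef]
    rw [zpow_negSucc, h1]
    field_simp

lemma mu_apply (w : Fin n → K) (x : Fin n → ℚ) :
    mu w x = ∑ j, ((x j : ℚ) : K) * w j := rfl

lemma cast_mulVec (B : Matrix (Fin n) (Fin n) ℤ) (y : Fin n → ℤ) :
    (Aq B) *ᵥ (fun i => ((y i : ℚ))) = fun i => (((B *ᵥ y) i : ℤ) : ℚ) := by
  funext i
  simp [Aq, mulVec, dotProduct]

lemma Aq_pow (A : Matrix (Fin n) (Fin n) ℤ) (d : ℕ) : Aq A ^ d = Aq (A ^ d) := by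
  exact (map_pow ((Int.castRingHom ℚ).mapMatrix) A d).symm

lemma GA_zero (A : Matrix (Fin n) (Fin n) ℤ) : (0 : Fin n → ℚ) ∈ GA A :=
  ⟨0, 0, by funext i; simp⟩

lemma GA_add (A : Matrix (Fin n) (Fin n) ℤ) (hA : A.det ≠ 0) {a b : Fin n → ℚ}
    (ha : a ∈ GA A) (hb : b ∈ GA A) : a + b ∈ GA A := by
  have hdet : IsUnit (Aq A).det := isUnit_det_Aq hA
  -- wlog helper
  have key : ∀ (k l : ℤ), k ≤ l → ∀ (x y : Fin n → ℤ),
      ((Aq A ^ k) *ᵥ fun i => ((x i : ℚ))) + ((Aq A ^ l) *ᵥ fun i => ((y i : ℚ))) ∈ GA A := by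
    intro k l hkl x y
    obtain ⟨d, hd⟩ : ∃ d : ℕ, l = k + (d : ℤ) :=
      ⟨(l - k).toNat, by omega⟩
    refine ⟨k, x + (A ^ d) *ᵥ y, ?_⟩
    have h1 : (Aq A ^ l) = Aq A ^ k * Aq A ^ (d : ℤ) := by
      rw [hd, Matrix.zpow_add hdet]
    rw [h1, ← Matrix.mulVec_mulVec]
    rw [zpow_natCast, Aq_pow, cast_mulVec]
    rw [← Matrix.mulVec_add]
    exact congrArg (Matrix.mulVec (Aq A ^ k)) (funext fun i => by simp)
  obtain ⟨k, x, rfl⟩ := ha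
  obtain ⟨l, y, rfl⟩ := hb
  rcases le_total k l with h | h
  · exact key k l h x y
  · have := key l k h y x
    rwa [add_comm] at this


/-- the projection `μ(x) = Σ x_j w_j` is an injective additive
homomorphism from `G_A` to `K` whose image is the `ℤ[λ,λ⁻¹]`-submodule
`Y = {Σ m_j λ^{k_j} w_j}` of `K`. -/
theorem stmt15 (n : ℕ) (A : Matrix (Fin n) (Fin n) ℤ) (hA : A.det ≠ 0)
    (hirr : Irreducible (A.charpoly.map (Int.castRingHom ℚ)))
    (K : Type) [Field K] [NumberField K] (lam : K)
    (hroot : Polynomial.aeval lam (A.charpoly.map (Int.castRingHom ℚ)) = 0)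
    (hgenK : Algebra.adjoin ℚ ({lam} : Set K) = ⊤)
    (u : Fin n → K) (hu : u ≠ 0)
    (hAu : (A.map (Int.cast : ℤ → K)) *ᵥ u = lam • u)
    (w : Fin n → K)
    (hAw : ((Aᵀ).map (Int.cast : ℤ → K)) *ᵥ w = lam • w)
    (hwu : ∑ j, w j * u j = 1) :
    ((∀ a b : Fin n → ℚ,
        (∑ j, (((a + b) j : ℚ) : K) * w j) =
          (∑ j, ((a j : ℚ) : K) * w j) + ∑ j, ((b j : ℚ) : K) * w j) ∧
      (∀ a ∈ GA A, ∀ b ∈ GA A,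
        (∑ j, ((a j : ℚ) : K) * w j) = (∑ j, ((b j : ℚ) : K) * w j) → a = b) ∧
      {y : K | ∃ a ∈ GA A, (∑ j, ((a j : ℚ) : K) * w j) = y} =
        {y : K | ∃ (m : Fin n → ℤ) (k : Fin n → ℤ),
          y = ∑ j, (m j : K) * lam ^ (k j) * w j}) := by
  set p := A.charpoly.map (Int.castRingHom ℚ) with hp
  -- λ ≠ 0
  have hcoeff : A.charpoly.coeff 0 ≠ 0 := by
    intro h
    rw [A.det_eq_sign_charpoly_coeff, h, mul_zero] at hA
    exact hA rfl
  have hlam : lam ≠ 0 := by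
    intro h0
    rw [h0] at hroot
    rw [aeval_def, Polynomial.eval₂_at_zero] at hroot
    simp only [hp, Polynomial.coeff_map] at hroot
    have h2 : ((A.charpoly.coeff 0 : ℤ) : ℚ) = 0 := by
      apply (algebraMap ℚ K).injective
      rw [map_zero]
      simpa using hroot
    exact hcoeff (by exact_mod_cast h2)
  -- w ≠ 0
  have hw0 : ∃ j, w j ≠ 0 := by
    by_contra h
    push_neg at h
    rw [Finset.sum_eq_zero (fun j _ => by rw [h j, zero_mul])] at hwu
    exact one_ne_zero hwu.symm
  -- minimal polynomial
  have hint : IsIntegral ℚ lam :=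
    ⟨p, (A.charpoly_monic).map _, by rwa [← aeval_def]⟩
  have hmin : minpoly ℚ lam = p :=
    (minpoly.eq_of_irreducible_of_monic hirr hroot ((A.charpoly_monic).map _)).symm
  -- finrank
  have hdim : Module.finrank ℚ K = n := by
    let pb : PowerBasis ℚ K :=
      (Algebra.adjoin.powerBasis hint).map
        ((Subalgebra.equivOfEq _ _ hgenK).trans Subalgebra.topEquiv)
    have h1 : Module.finrank ℚ K = pb.dim := pb.finrank
    have h2 : pb.dim = (minpoly ℚ lam).natDegree := by
      simp [pb, PowerBasis.map_dim]
    rw [h1, h2, hmin, hp, (A.charpoly_monic).natDegree_map, A.charpoly_natDegree_eq_dim,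
      Fintype.card_fin]
  -- range of mu is closed under multiplication by any element of K
  have hrange : ∀ z : K, ∀ y ∈ LinearMap.range (mu w), z * y ∈ LinearMap.range (mu w) := by
    intro z
    have hz : z ∈ Algebra.adjoin ℚ ({lam} : Set K) := by rw [hgenK]; trivial
    induction hz using Algebra.adjoin_induction with
    | mem t ht =>
      rw [Set.mem_singleton_iff] at ht
      rintro y ⟨x, rfl⟩
      rw [ht]
      exact ⟨Aq A *ᵥ x, mu_mulVec A w lam hAw x⟩
    | algebraMap r =>
      rintro y ⟨x, rfl⟩
      refine ⟨r • x, ?_⟩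
      rw [_root_.map_smul, Rat.smul_def, eq_ratCast (algebraMap ℚ K) r]
    | add z1 z2 h1 h2 ih1 ih2 =>
      intro y hy
      rw [add_mul]
      exact Submodule.add_mem _ (ih1 y hy) (ih2 y hy)
    | mul z1 z2 h1 h2 ih1 ih2 =>
      intro y hy
      rw [mul_assoc]
      exact ih1 _ (ih2 y hy)
  have hsurj : Function.Surjective (mu w) := by
    intro y
    obtain ⟨j, hj⟩ := hw0
    have hwj : w j ∈ LinearMap.range (mu w) := by
      refine ⟨Pi.single j 1, ?_⟩
      simp [mu_apply, Pi.single_apply, apply_ite, ite_mul]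
    have h := hrange (y / w j) (w j) hwj
    rw [div_mul_cancel₀ y hj] at h
    exact h
  have hinj : Function.Injective (mu w) := by
    have heq : Module.finrank ℚ (Fin n → ℚ) = Module.finrank ℚ K := by
      rw [hdim, Module.finrank_fin_fun]
    exact (LinearMap.injective_iff_surjective_of_finrank_eq_finrank heq).mpr hsurj
  refine ⟨fun a b => map_add (mu w) a b, fun a _ b _ h => hinj h, ?_⟩
  ext y
  simp only [Set.mem_setOf_eq]
  constructor
  · rintro ⟨a, ⟨k, x, rfl⟩, rfl⟩
    refine ⟨x, fun _ => k, ?_⟩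
    have h := mu_zpow A hA w lam hlam hAw k (fun i => ((x i : ℚ)))
    rw [show (∑ j, (((((Aq A ^ k) *ᵥ fun i => ((x i : ℚ))) j : ℚ)) : K) * w j)
        = mu w ((Aq A ^ k) *ᵥ fun i => ((x i : ℚ))) from rfl, h, mu_apply, Finset.mul_sum]
    refine Finset.sum_congr rfl fun j _ => ?_
    push_cast
    ring
  · rintro ⟨m, k, rfl⟩
    refine ⟨∑ j, ((Aq A ^ (k j)) *ᵥ fun i => (((m j • Pi.single j 1 : Fin n → ℤ) i : ℚ))), ?_, ?_⟩
    · refine Finset.sum_induction _ (· ∈ GA A) (fun _ _ => GA_add A hA) (GA_zero A) ?_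
      intro j _
      exact ⟨k j, m j • Pi.single j 1, rfl⟩
    · rw [show (∑ i, ((((∑ j, ((Aq A ^ (k j)) *ᵥ fun i' => (((m j • Pi.single j 1 : Fin n → ℤ) i' : ℚ)))) i : ℚ)) : K) * w i)
          = mu w (∑ j, ((Aq A ^ (k j)) *ᵥ fun i' => (((m j • Pi.single j 1 : Fin n → ℤ) i' : ℚ)))) from rfl]
      rw [map_sum]
      refine (Finset.sum_congr rfl fun j _ => ?_).symm
      rw [mu_zpow A hA w lam hlam hAw]
      have hsingle : mu w (fun i' => (((m j • Pi.single j 1 : Fin n → ℤ) i' : ℚ))) = (m j : K) * w j := by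
        rw [mu_apply]
        simp [Pi.single_apply, apply_ite, ite_mul]
      rw [hsingle]
      ring
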